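/- arXiv:1711.04082 — 11 statements merged into one kernel-verified Lean document; each statement's English description precedes it below -/
import Mathlib

section
/- If σ is a compatible quasiorder on an ordered F-algebra A, then σ ∩ σ⁻¹ is an order-congruence of A, i.e., it is a congruence of the underlying algebra satisfying the closed chain condition: a ≤_{σ∩σ⁻¹} b ≤_{σ∩σ⁻¹} a implies a (σ∩σ⁻¹) b. -/
structure Signature where
  F : Type
  ar : F → ℕ

structure OAlg (S : Signature) where
  carrier : Type
  ops : ∀ f : S.F, (Fin (S.ar f) → carrier) → carrier
  le : carrier → carrier → Prop
  le_refl : ∀ a, le a a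
  le_trans : ∀ a b c, le a b → le b c → le a c
  le_antisymm : ∀ a b, le a b → le b a → a = b
  mono : ∀ (f : S.F) (a b : Fin (S.ar f) → carrier),
    (∀ i, le (a i) (b i)) → le (ops f a) (ops f b)

structure OHom {S : Signature} (A B : OAlg S) where
  toFun : A.carrier → B.carrier
  map_ops : ∀ (f : S.F) (a : Fin (S.ar f) → A.carrier),
    toFun (A.ops f a) = B.ops f (fun i => toFun (a i))
  mono : ∀ x y, A.le x y → B.le (toFun x) (toFun y)

/-- A congruence: an equivalence relation compatible with the operations. -/
def IsCong {S : Signature} (A : OAlg S) (θ : A.carrier → A.carrier → Prop) : Prop :=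
  Equivalence θ ∧
  ∀ (f : S.F) (a b : Fin (S.ar f) → A.carrier),
    (∀ i, θ (a i) (b i)) → θ (A.ops f a) (A.ops f b)

/-- `LeTheta A θ a b` holds iff there is a chain
`a ≤ a₁ θ b₁ ≤ a₂ θ b₂ ≤ ⋯ ≤ aₙ θ bₙ ≤ b` (possibly with `n = 0`, i.e. `a ≤ b`). -/
inductive LeTheta {S : Signature} (A : OAlg S) (θ : A.carrier → A.carrier → Prop) :
    A.carrier → A.carrier → Prop
  | base {a b : A.carrier} : A.le a b → LeTheta A θ a b
  | step {a a₁ b₁ c : A.carrier} : A.le a a₁ → θ a₁ b₁ → LeTheta A θ b₁ c → LeTheta A θ a c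

/-- If `σ` is a compatible quasiorder on an ordered algebra `A`, then `σ ∩ σ⁻¹`
is an order-congruence of `A`: a congruence of the underlying algebra satisfying
the closed chain condition. -/
theorem inf_inv_is_order_congruence {S : Signature} (A : OAlg S)
    (σ : A.carrier → A.carrier → Prop)
    (hrefl : ∀ a, σ a a)
    (htrans : ∀ a b c, σ a b → σ b c → σ a c)
    (hcompat : ∀ (f : S.F) (a b : Fin (S.ar f) → A.carrier),
      (∀ i, σ (a i) (b i)) → σ (A.ops f a) (A.ops f b))
    (hle : ∀ a b, A.le a b → σ a b) :
    IsCong A (fun a b => σ a b ∧ σ b a) ∧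
    (∀ a b : A.carrier,
      LeTheta A (fun a b => σ a b ∧ σ b a) a b →
      LeTheta A (fun a b => σ a b ∧ σ b a) b a →
      σ a b ∧ σ b a) := by
  have key : ∀ a b, LeTheta A (fun a b => σ a b ∧ σ b a) a b → σ a b := by
    intro a b h
    induction h with
    | base h => exact hle _ _ h
    | step h1 h2 _ ih => exact htrans _ _ _ (hle _ _ h1) (htrans _ _ _ h2.1 ih)
  refine ⟨⟨⟨fun a => ⟨hrefl a, hrefl a⟩, fun h => ⟨h.2, h.1⟩,
    fun h1 h2 => ⟨htrans _ _ _ h1.1 h2.1, htrans _ _ _ h2.2 h1.2⟩⟩, ?_⟩, ?_⟩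
  · intro f a b h
    exact ⟨hcompat f a b fun i => (h i).1, hcompat f b a fun i => (h i).2⟩
  · intro a b h1 h2
    exact ⟨key _ _ h1, key _ _ h2⟩
end

section
/- Let A be an ordered F-algebra, θ an order-congruence on A, and define the quotient order on A/θ by [a] ≤ [b] iff a ≤_θ b (i.e., there is a chain a ≤ a_1 θ b_1 ≤ ⋯ ≤ a_n θ b_n ≤ b). Then this relation is a well-defined partial order on A/θ compatible with the quotient operations, so A/θ is an ordered F-algebra and the canonical map A → A/θ is a monotone homomorphism. -/
/-- An order-congruence: a congruence satisfying the closed chain condition. -/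
def IsOrderCong {S : Signature} (A : OAlg S) (θ : A.carrier → A.carrier → Prop) : Prop :=
  IsCong A θ ∧ ∀ a b : A.carrier, LeTheta A θ a b → LeTheta A θ b a → θ a b

section Aux
variable {S : Signature} {A : OAlg S} {θ : A.carrier → A.carrier → Prop}

lemma le_leTheta {a b c : A.carrier} (h : A.le a b) (h2 : LeTheta A θ b c) :
    LeTheta A θ a c := by
  cases h2 with
  | base h' => exact .base (A.le_trans _ _ _ h h')
  | step h' ht hc => exact .step (A.le_trans _ _ _ h h') ht hc

lemma leTheta_trans {a b c : A.carrier} (h1 : LeTheta A θ a b) (h2 : LeTheta A θ b c) :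
    LeTheta A θ a c := by
  induction h1 with
  | base h => exact le_leTheta h h2
  | step h ht _ ih => exact .step h ht (ih h2)

lemma leTheta_refl (a : A.carrier) : LeTheta A θ a a := .base (A.le_refl a)

lemma theta_leTheta {a b : A.carrier} (h : θ a b) : LeTheta A θ a b :=
  .step (A.le_refl a) h (leTheta_refl b)

/-- changing one coordinate along `LeTheta` preserves `LeTheta` of the op values. -/
lemma single_coord (hC : IsCong A θ) (f : S.F) (c : Fin (S.ar f) → A.carrier)
    (j : Fin (S.ar f)) {x y : A.carrier} (h : LeTheta A θ x y) :
    LeTheta A θ (A.ops f (Function.update c j x)) (A.ops f (Function.update c j y)) := by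
  induction h with
  | @base x y hle =>
    refine .base (A.mono f _ _ fun i => ?_)
    by_cases hij : i = j
    · subst hij; simp [Function.update_self, hle]
    · simp [Function.update_of_ne hij, A.le_refl]
  | @step x a₁ b₁ y hle ht _ ih =>
    refine .step (a₁ := A.ops f (Function.update c j a₁))
      (A.mono f _ _ fun i => ?_) (hC.2 f _ _ fun i => ?_) ih
    · by_cases hij : i = j
      · subst hij; simp [Function.update_self, hle]
      · simp [Function.update_of_ne hij, A.le_refl]
    · by_cases hij : i = j
      · subst hij; simp [Function.update_self, ht]
      · simp [Function.update_of_ne hij]; exact hC.1.1 _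

lemma ops_leTheta (hC : IsCong A θ) (f : S.F) (a b : Fin (S.ar f) → A.carrier)
    (h : ∀ i, LeTheta A θ (a i) (b i)) :
    LeTheta A θ (A.ops f a) (A.ops f b) := by
  have key : ∀ k : ℕ, LeTheta A θ (A.ops f a)
      (A.ops f (fun i => if i.val < k then b i else a i)) := by
    intro k
    induction k with
    | zero => simp [leTheta_refl]
    | succ k ih =>
      refine leTheta_trans ih ?_
      by_cases hk : k < S.ar f
      · set j : Fin (S.ar f) := ⟨k, hk⟩
        have e1 : (fun i : Fin (S.ar f) => if i.val < k then b i else a i)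
            = Function.update (fun i : Fin (S.ar f) => if i.val < k then b i else a i) j (a j) := by
          funext i
          by_cases hij : i = j
          · subst hij; simp [Function.update_self, j]
          · simp [Function.update_of_ne hij]
        have e2 : (fun i : Fin (S.ar f) => if i.val < k + 1 then b i else a i)
            = Function.update (fun i : Fin (S.ar f) => if i.val < k then b i else a i) j (b j) := by
          funext i
          by_cases hij : i = j
          · subst hij; simp [j]
          · simp only [Function.update_of_ne hij]
            have : i.val ≠ k := fun hv => hij (Fin.ext hv)
            rcases Nat.lt_or_ge i.val k with h' | h'
            · simp [h', Nat.lt_succ_of_lt h']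
            · have : ¬ i.val < k + 1 := by omega
              simp [Nat.not_lt_of_ge h', this]
        rw [e1, e2]
        exact single_coord hC f _ j (h j)
      · have : (fun i : Fin (S.ar f) => if i.val < k + 1 then b i else a i)
            = (fun i : Fin (S.ar f) => if i.val < k then b i else a i) := by
          funext i
          have h1 : i.val < k := lt_of_lt_of_le i.isLt (Nat.le_of_not_lt hk)
          simp [h1, Nat.lt_succ_of_lt h1]
        rw [this]; exact leTheta_refl _
  have := key (S.ar f)
  have e : (fun i : Fin (S.ar f) => if i.val < S.ar f then b i else a i) = b := by
    funext i; simp [i.isLt]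
  rwa [e] at this

end Aux

/-- The regular quotient of an ordered algebra by an order-congruence `θ` exists:
there is an ordered algebra `Q` and a surjective monotone homomorphism `π : A → Q`
whose kernel is exactly `θ` and such that `π a ≤ π b` iff `a ≤_θ b`.  In other
words, the relation `[a] ≤ [b] ⟺ a ≤_θ b` is a well-defined partial order on `A/θ`
compatible with the quotient operations, and the canonical map is a monotone
homomorphism. -/

theorem regular_quotient_exists {S : Signature} (A : OAlg S)
    (θ : A.carrier → A.carrier → Prop) (hθ : IsOrderCong A θ) :
    ∃ (Q : OAlg S) (π : OHom A Q),
      Function.Surjective π.toFun ∧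
      (∀ a b : A.carrier, π.toFun a = π.toFun b ↔ θ a b) ∧
      (∀ a b : A.carrier, Q.le (π.toFun a) (π.toFun b) ↔ LeTheta A θ a b) := by
  obtain ⟨⟨hE, hComp⟩, hChain⟩ := hθ
  have hC : IsCong A θ := ⟨hE, hComp⟩
  letI setoidA : Setoid A.carrier := ⟨θ, hE⟩
  -- LeTheta respects θ on both sides
  have resp : ∀ a₁ b₁ a₂ b₂ : A.carrier, θ a₁ a₂ → θ b₁ b₂ →
      (LeTheta A θ a₁ b₁ ↔ LeTheta A θ a₂ b₂) := by
    intro a₁ b₁ a₂ b₂ ha hb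
    constructor
    · intro h
      exact leTheta_trans (theta_leTheta (hE.symm ha)) (leTheta_trans h (theta_leTheta hb))
    · intro h
      exact leTheta_trans (theta_leTheta ha) (leTheta_trans h (theta_leTheta (hE.symm hb)))
  -- quotient le
  let qle : Quotient setoidA → Quotient setoidA → Prop :=
    Quotient.lift₂ (LeTheta A θ) (by
      intro a b a' b' ha hb
      exact propext (resp a b a' b' ha hb))
  -- quotient ops
  let qops : ∀ f : S.F, (Fin (S.ar f) → Quotient setoidA) → Quotient setoidA :=
    fun f v => Quotient.liftOn (Quotient.finChoice v)
      (fun a => Quotient.mk setoidA (A.ops f a))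
      (by
        intro a b hab
        exact Quotient.sound (hComp f a b hab))
  have qops_mk : ∀ (f : S.F) (a : Fin (S.ar f) → A.carrier),
      qops f (fun i => Quotient.mk setoidA (a i)) = Quotient.mk setoidA (A.ops f a) := by
    intro f a
    simp only [qops]
    rw [Quotient.finChoice_eq]
    rfl
  refine ⟨{
    carrier := Quotient setoidA
    ops := qops
    le := qle
    le_refl := fun a => by
      induction a using Quotient.inductionOn with
      | h a => exact leTheta_refl a
    le_trans := fun a b c => by
      induction a using Quotient.inductionOn with
      | h a =>
      induction b using Quotient.inductionOn with
      | h b =>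
      induction c using Quotient.inductionOn with
      | h c => exact fun h1 h2 => leTheta_trans h1 h2
    le_antisymm := fun a b => by
      induction a using Quotient.inductionOn with
      | h a =>
      induction b using Quotient.inductionOn with
      | h b => exact fun h1 h2 => Quotient.sound (hChain a b h1 h2)
    mono := fun f v w hvw => by
      have hv : v = fun i => Quotient.mk setoidA (v i).out :=
        funext fun i => (Quotient.out_eq _).symm
      have hw : w = fun i => Quotient.mk setoidA (w i).out :=
        funext fun i => (Quotient.out_eq _).symm
      rw [hv, hw, qops_mk, qops_mk]
      refine ops_leTheta hC f _ _ fun i => ?_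
      have h := hvw i
      rw [congrFun hv i, congrFun hw i] at h
      exact h }, ⟨Quotient.mk setoidA, fun f a => (qops_mk f a).symm,
        fun x y h => LeTheta.base h⟩, ?_, ?_, ?_⟩
  · exact fun q => Quotient.inductionOn q fun a => ⟨a, rfl⟩
  · exact fun a b => Quotient.eq
  · exact fun a b => Iff.rfl
end

section
/- Let f : A → B be a homomorphism of ordered F-algebras and θ an order-congruence on A such that ≤_θ ⊆ ker⃗ f (i.e., a ≤_θ b implies f(a) ≤_B f(b)). Then there exists a unique homomorphism of ordered F-algebras g : A/θ → B such that g ∘ θ♮ = f, where θ♮ : A → A/θ is the canonical quotient homomorphism. -/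
/-- Factorization through the regular quotient: if `f : A → B` is a homomorphism of
ordered algebras, `θ` an order-congruence on `A` with `≤_θ ⊆ ker⃗ f`, and
`π : A → A/θ` the canonical quotient homomorphism (characterized by surjectivity,
`ker π = θ` and `ker⃗ π = ≤_θ`), then there is a unique homomorphism
`g : A/θ → B` with `g ∘ π = f`. -/
theorem factor_through_quotient {S : Signature} (A B Q : OAlg S)
    (θ : A.carrier → A.carrier → Prop) (hθ : IsOrderCong A θ)
    (π : OHom A Q)
    (hsurj : Function.Surjective π.toFun)
    (hker : ∀ a b : A.carrier, π.toFun a = π.toFun b ↔ θ a b)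
    (hdker : ∀ a b : A.carrier, Q.le (π.toFun a) (π.toFun b) ↔ LeTheta A θ a b)
    (f : OHom A B)
    (hf : ∀ a b : A.carrier, LeTheta A θ a b → B.le (f.toFun a) (f.toFun b)) :
    ∃! g : OHom Q B, ∀ a : A.carrier, g.toFun (π.toFun a) = f.toFun a := by
  -- f is constant on θ-classes
  have key : ∀ a b : A.carrier, θ a b → f.toFun a = f.toFun b := by
    intro a b hab
    have h1 : LeTheta A θ a b := .step (A.le_refl a) hab (.base (A.le_refl b))
    have h2 : LeTheta A θ b a := .step (A.le_refl b) (hθ.1.1.symm hab) (.base (A.le_refl a))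
    exact B.le_antisymm _ _ (hf _ _ h1) (hf _ _ h2)
  classical
  let sec : Q.carrier → A.carrier := fun q => (hsurj q).choose
  have hsec : ∀ q, π.toFun (sec q) = q := fun q => (hsurj q).choose_spec
  let gfun : Q.carrier → B.carrier := fun q => f.toFun (sec q)
  have hg : ∀ a, gfun (π.toFun a) = f.toFun a := by
    intro a
    exact key _ _ ((hker _ _).1 (hsec (π.toFun a)))
  refine ⟨⟨gfun, ?_, ?_⟩, hg, ?_⟩
  · intro op qs
    have hops : Q.ops op qs = π.toFun (A.ops op (fun i => sec (qs i))) := by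
      rw [π.map_ops]
      congr 1
      funext i
      exact (hsec (qs i)).symm
    rw [hops, hg, f.map_ops]
  · intro x y hxy
    have : Q.le (π.toFun (sec x)) (π.toFun (sec y)) := by rw [hsec, hsec]; exact hxy
    exact hf _ _ ((hdker _ _).1 this)
  · intro g' hg'
    have : g'.toFun = gfun := by
      funext q
      obtain ⟨a, rfl⟩ := hsurj q
      rw [hg' a, hg a]
    cases g'
    simp only at this
    subst this
    rfl
end

section
/- Let t₁ and t₂ be constant-free terms of type F over variables z₁,…,z_n and z₁,…,z_m respectively, in which the variables occur (reading the leaves of the term tree left to right) exactly in the order z₁, z₂, …, z_n (resp. z₁, …, z_m). If t₁(a₁,…,a_n) = t₂(b₁,…,b_m) as terms, for some a₁,…,a_n, b₁,…,b_m drawn from X ∪ F₀ (variables or constant symbols), then n = m, t₁ = t₂ as terms, and (a₁,…,a_n) = (b₁,…,b_m). -/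
/-- Terms of type `S` over a set `X` of variables. Constants are the nullary
operation symbols. -/
inductive Term (S : Signature) (X : Type) : Type
  | var : X → Term S X
  | op : (f : S.F) → (Fin (S.ar f) → Term S X) → Term S X

/-- The sequence of variables of a term, read left to right on the leaves of its tree. -/
def varList {S : Signature} {X : Type} : Term S X → List X
  | .var x => [x]
  | .op _ a => (List.ofFn (fun i => varList (a i))).flatten

/-- A term is constant free if no nullary operation symbol occurs in it. -/
def ConstFree {S : Signature} {X : Type} : Term S X → Prop
  | .var _ => True
  | .op f a => S.ar f ≠ 0 ∧ ∀ i, ConstFree (a i)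

/-- Substitution of terms for the variables `z₀, z₁, z₂, …`. -/
def subst {S : Signature} {X : Type} (σ : ℕ → Term S X) : Term S ℕ → Term S X
  | .var n => σ n
  | .op f a => .op f (fun i => subst σ (a i))

/-- A term is a leaf if it is a variable or a constant symbol. -/
def IsLeaf {S : Signature} {X : Type} : Term S X → Prop
  | .var _ => True
  | .op f _ => S.ar f = 0

/-- The number of leaves of the tree of a term. -/
def leafCount {S : Signature} {X : Type} : Term S X → ℕ
  | .var _ => 1
  | .op f a => if S.ar f = 0 then 1 else (List.ofFn (fun i => leafCount (a i))).sum

/-- The number of occurrences of non-nullary operation symbols in a term. -/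
def opCount {S : Signature} {X : Type} : Term S X → ℕ
  | .var _ => 0
  | .op f a => (if S.ar f = 0 then 0 else 1) + (List.ofFn (fun i => opCount (a i))).sum

/-
Because the terms are constant free and only leaves are substituted, the operation
nodes of `subst a t` are exactly those of `t`. So `subst a t₁ = subst b t₂` forces
`t₁` and `t₂` to have the same operation skeleton and
`(varList t₁).map a = (varList t₂).map b`, and two terms with the same skeleton and
the same variable list coincide. For regular terms the variable lists are `range n`
and `range m`, which gives `n = m` and `a i = b i` for `i < n`.
-/

theorem List.eq_of_flatten_eq_of_map_length_eq {α : Type*} :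
    ∀ {L₁ L₂ : List (List α)}, L₁.map length = L₂.map length → L₁.flatten = L₂.flatten → L₁ = L₂
  | [], [], _, _ => rfl
  | [], _ :: _, hlen, _ | _ :: _, [], hlen, _ => by simp at hlen
  | l₁ :: L₁, l₂ :: L₂, hlen, hflat => by
    simp only [map_cons, cons.injEq] at hlen
    obtain ⟨rfl, hrest⟩ := List.append_inj hflat hlen.1
    rw [eq_of_flatten_eq_of_map_length_eq hlen.2 hrest]

namespace Term

variable {S : Signature} {X : Type} {a b : ℕ → Term S X}

theorem subst_var_ne_subst_op {i : ℕ} (ha : IsLeaf (a i)) {g : S.F} (hg : S.ar g ≠ 0)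
    (v : Fin (S.ar g) → Term S ℕ) : subst a (.var i) ≠ subst b (.op g v) := by
  intro h
  simp only [subst] at h
  rw [h] at ha
  exact hg ha

theorem map_varList_eq_of_subst_eq (ha : ∀ i, IsLeaf (a i)) (hb : ∀ i, IsLeaf (b i)) :
    ∀ {t₁ t₂ : Term S ℕ}, ConstFree t₁ → ConstFree t₂ → subst a t₁ = subst b t₂ →
      (varList t₁).map a = (varList t₂).map b
  | .var _, .var _, _, _, h => by simpa [varList, subst] using h
  | .var i, .op _ v, _, h₂, h => (subst_var_ne_subst_op (ha i) h₂.1 v h).elim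
  | .op _ u, .var j, h₁, _, h => (subst_var_ne_subst_op (hb j) h₁.1 u h.symm).elim
  | .op f u, .op g v, h₁, h₂, h => by
    simp only [subst, Term.op.injEq] at h
    obtain ⟨rfl, hargs⟩ := h
    have hchild i :=
      map_varList_eq_of_subst_eq ha hb (h₁.2 i) (h₂.2 i) (congrFun (eq_of_heq hargs) i)
    simp only [varList, List.map_flatten, List.map_ofFn, Function.comp_def, hchild]

theorem eq_of_subst_eq_of_varList_eq (ha : ∀ i, IsLeaf (a i)) (hb : ∀ i, IsLeaf (b i)) :
    ∀ {t₁ t₂ : Term S ℕ}, ConstFree t₁ → ConstFree t₂ → subst a t₁ = subst b t₂ →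
      varList t₁ = varList t₂ → t₁ = t₂
  | .var _, .var _, _, _, _, hv => by simpa [varList] using hv
  | .var i, .op _ v, _, h₂, h, _ => (subst_var_ne_subst_op (ha i) h₂.1 v h).elim
  | .op _ u, .var j, h₁, _, h, _ => (subst_var_ne_subst_op (hb j) h₁.1 u h.symm).elim
  | .op f u, .op g v, h₁, h₂, h, hv => by
    simp only [subst, Term.op.injEq] at h
    obtain ⟨rfl, hargs⟩ := h
    have hchild i : subst a (u i) = subst b (v i) := congrFun (eq_of_heq hargs) i
    have hchild_length i : (varList (u i)).length = (varList (v i)).length := by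
      simpa using congrArg List.length
        (map_varList_eq_of_subst_eq ha hb (h₁.2 i) (h₂.2 i) (hchild i))
    have hlen : (List.ofFn fun i => varList (u i)).map List.length
        = (List.ofFn fun i => varList (v i)).map List.length := by
      simp only [List.map_ofFn, Function.comp_def, hchild_length]
    have hvars := List.ofFn_injective (List.eq_of_flatten_eq_of_map_length_eq hlen hv)
    congr 1
    funext i
    exact eq_of_subst_eq_of_varList_eq ha hb (h₁.2 i) (h₂.2 i) (hchild i) (congrFun hvars i)

end Term

/-- If `t₁`, `t₂` are constant-free regular terms (their left-to-right variable
sequences are exactly `z₀, …, z_{n-1}` resp. `z₀, …, z_{m-1}`), and substituting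
leaves (variables or constant symbols) `a₀,…` into `t₁` and `b₀,…` into `t₂`
yields the same term, then `n = m`, `t₁ = t₂`, and the substituted leaves agree. -/
theorem regular_term_rewriting {S : Signature} {X : Type} (t₁ t₂ : Term S ℕ) (n m : ℕ)
    (h₁ : ConstFree t₁) (h₂ : ConstFree t₂)
    (hv₁ : varList t₁ = List.range n) (hv₂ : varList t₂ = List.range m)
    (a b : ℕ → Term S X)
    (ha : ∀ i, IsLeaf (a i)) (hb : ∀ i, IsLeaf (b i))
    (heq : subst a t₁ = subst b t₂) :
    n = m ∧ t₁ = t₂ ∧ ∀ i < n, a i = b i := by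
  have hmap := Term.map_varList_eq_of_subst_eq ha hb h₁ h₂ heq
  rw [hv₁, hv₂] at hmap
  obtain rfl : n = m := by simpa using congrArg List.length hmap
  refine ⟨rfl, Term.eq_of_subst_eq_of_varList_eq ha hb h₁ h₂ heq (hv₁.trans hv₂.symm),
    fun i hi => ?_⟩
  simpa [hi] using congrArg (·[i]?) hmap
end

section
/- Let T(X) be the term algebra of type F over a poset (X, ≤_X), where constant symbols F₀ also carry a partial order ≤_{F₀}, and let ≤ = ≤_X ⊔ ≤_{F₀} on the leaves. Let Σ_≤ be the compatible quasiorder on the term algebra (with trivial order) generated by ≤. Then Σ_≤ ∩ Σ_≤⁻¹ is the diagonal relation on T(X); in other words, Σ_≤ is a partial order on T(X). -/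
/-- The compatible quasiorder on the term algebra (with trivial order) generated by
a relation `H`: the smallest reflexive, transitive relation containing `H` and
compatible with the operations. -/
inductive GenQuasi (S : Signature) (X : Type) (H : Term S X → Term S X → Prop) :
    Term S X → Term S X → Prop
  | of {a b : Term S X} : H a b → GenQuasi S X H a b
  | refl (a : Term S X) : GenQuasi S X H a a
  | trans {a b c : Term S X} :
      GenQuasi S X H a b → GenQuasi S X H b c → GenQuasi S X H a c
  | compat (f : S.F) (a b : Fin (S.ar f) → Term S X) :
      (∀ i, GenQuasi S X H (a i) (b i)) →
      GenQuasi S X H (.op f a) (.op f b)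

/-- The relation `≤ = ≤_X ⊔ ≤_{F₀}` on leaves of the term algebra: two variables
are related via the order of `X`, and two constant symbols via the order `r` on
nullary operation symbols. -/
inductive LeafLe (S : Signature) (X : Type) [LE X] (r : S.F → S.F → Prop) :
    Term S X → Term S X → Prop
  | var {x y : X} : x ≤ y → LeafLe S X r (.var x) (.var y)
  | const {c d : S.F} (hc : S.ar c = 0) (hd : S.ar d = 0)
      (ac : Fin (S.ar c) → Term S X) (ad : Fin (S.ar d) → Term S X) :
      r c d → LeafLe S X r (.op c ac) (.op d ad)

/-- Auxiliary structural order: same tree shape, leaves related. -/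
inductive StrL (S : Signature) (X : Type) [LE X] (r : S.F → S.F → Prop) :
    Term S X → Term S X → Prop
  | var {x y : X} : x ≤ y → StrL S X r (.var x) (.var y)
  | const {c d : S.F} (hc : S.ar c = 0) (hd : S.ar d = 0)
      (ac : Fin (S.ar c) → Term S X) (ad : Fin (S.ar d) → Term S X) :
      r c d → StrL S X r (.op c ac) (.op d ad)
  | op (f : S.F) (a b : Fin (S.ar f) → Term S X) :
      (∀ i, StrL S X r (a i) (b i)) → StrL S X r (.op f a) (.op f b)

lemma StrL_refl {S : Signature} {X : Type} [PartialOrder X] {r : S.F → S.F → Prop} :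
    ∀ t : Term S X, StrL S X r t t
  | .var x => .var le_rfl
  | .op f a => .op f a a (fun i => StrL_refl (a i))

lemma StrL_trans {S : Signature} {X : Type} [PartialOrder X] {r : S.F → S.F → Prop}
    (hr : ∀ c d e : S.F, r c d → r d e → r c e) :
    ∀ {a b c : Term S X}, StrL S X r a b → StrL S X r b c → StrL S X r a c := by
  intro a b c h1 h2
  induction h1 generalizing c with
  | var h =>
    cases h2 with
    | var h' => exact .var (h.trans h')
  | const hc hd ac ad h =>
    cases h2 with
    | const hd' he _ ae h' => exact .const hc he ac ae (hr _ _ _ h h')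
    | op f _ b hb => exact .const hc hd ac b h
  | op f a b hab ih =>
    cases h2 with
    | const hd he _ ae h' => exact .const hd he a ae h'
    | op _ _ c hbc => exact .op f a c (fun i => ih i (hbc i))

lemma StrL_antisymm {S : Signature} {X : Type} [PartialOrder X] {r : S.F → S.F → Prop}
    (ha : ∀ c d : S.F, r c d → r d c → c = d) :
    ∀ s t : Term S X, StrL S X r s t → StrL S X r t s → s = t := by
  intro s
  induction s with
  | var x =>
    intro t h1 h2
    cases h1 with
    | var h => cases h2 with
      | var h' => exact congrArg _ (le_antisymm h h')
  | op f a ih =>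
    intro t h1 h2
    cases h1 with
    | const hc hd ac ad h =>
      cases h2 with
      | const hd' hc' _ _ h' =>
        cases ha _ _ h h'
        exact congrArg _ (funext fun i => absurd i.isLt (by omega))
      | op _ _ b hb =>
        exact congrArg _ (funext fun i => absurd i.isLt (by omega))
    | op _ _ b hb =>
      cases h2 with
      | const hd hc _ _ h' =>
        exact congrArg _ (funext fun i => absurd i.isLt (by omega))
      | op _ _ c hc =>
        exact congrArg _ (funext fun i => ih i _ (hb i) (hc i))

lemma genQuasi_to_StrL {S : Signature} {X : Type} [PartialOrder X] {r : S.F → S.F → Prop}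
    (hr : ∀ c d e : S.F, r c d → r d e → r c e) {s t : Term S X}
    (h : GenQuasi S X (LeafLe S X r) s t) : StrL S X r s t := by
  induction h with
  | of h =>
    cases h with
    | var h => exact .var h
    | const hc hd ac ad h => exact .const hc hd ac ad h
  | refl a => exact StrL_refl a
  | trans _ _ ih1 ih2 => exact StrL_trans hr ih1 ih2
  | compat f a b _ ih => exact .op f a b ih

/-- `Σ_≤ ∩ Σ_≤⁻¹` is the diagonal: the compatible quasiorder `Σ_≤` on the term
algebra generated by the leaf order `≤_X ⊔ ≤_{F₀}` is antisymmetric, i.e. a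
partial order on `T(X)`. -/
theorem genQuasi_antisymm {S : Signature} {X : Type} [PartialOrder X]
    (r : S.F → S.F → Prop)
    (hr_refl : ∀ c : S.F, S.ar c = 0 → r c c)
    (hr_trans : ∀ c d e : S.F, r c d → r d e → r c e)
    (hr_antisymm : ∀ c d : S.F, r c d → r d c → c = d) :
    ∀ s t : Term S X,
      GenQuasi S X (LeafLe S X r) s t → GenQuasi S X (LeafLe S X r) t s → s = t := by
  intro s t h1 h2
  exact StrL_antisymm hr_antisymm s t (genQuasi_to_StrL hr_trans h1) (genQuasi_to_StrL hr_trans h2)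
end

section
/- For terms t₁, t₂ in the ordered term algebra over a poset (X, ≤_X) (with ordered constants), t₁ ⪯ t₂ holds if and only if t₁ and t₂ have the same skeleton (tree shape with internal operation-symbol labels, forgetting leaf labels) and the i-th leaf label of t₁ is ≤ the i-th leaf label of t₂ (in the order ≤_X ⊔ ≤_{F₀}) for every leaf position i. -/
/-- The skeleton of (the tree of) a term: all leaf labels are removed. -/
def skel {S : Signature} {X : Type} : Term S X → Term S Unit
  | .var _ => .var ()
  | .op f a => if S.ar f = 0 then .var () else .op f (fun i => skel (a i))

/-- The left-to-right list of leaf labels of a term; a leaf label is either a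
variable or a (nullary) constant symbol. -/
def leafLabels {S : Signature} {X : Type} : Term S X → List (X ⊕ S.F)
  | .var x => [Sum.inl x]
  | .op f a => if S.ar f = 0 then [Sum.inr f]
      else (List.ofFn (fun i => leafLabels (a i))).flatten

/-- The order `≤_X ⊔ ≤_{F₀}` on leaf labels. -/
def LabelLe {S : Signature} {X : Type} [LE X] (r : S.F → S.F → Prop) :
    (X ⊕ S.F) → (X ⊕ S.F) → Prop
  | .inl x, .inl y => x ≤ y
  | .inr c, .inr d => r c d
  | _, _ => False


section Aux

open List

lemma aux_forall₂_ofFn {α β : Type*} {R : α → β → Prop} {n : ℕ} {f : Fin n → α}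
    {g : Fin n → β} (h : ∀ i, R (f i) (g i)) :
    List.Forall₂ R (List.ofFn f) (List.ofFn g) := by
  rw [List.forall₂_iff_get]
  refine ⟨by simp, fun i h₁ h₂ => ?_⟩
  simp only [List.get_eq_getElem, List.getElem_ofFn]
  exact h _

lemma aux_ofFn_forall₂ {α β : Type*} {R : α → β → Prop} {n : ℕ} {f : Fin n → α}
    {g : Fin n → β} (h : List.Forall₂ R (List.ofFn f) (List.ofFn g)) :
    ∀ i, R (f i) (g i) := by
  rw [List.forall₂_iff_get] at h
  intro i
  have := h.2 i.val (by simp) (by simp)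
  simpa using this

lemma aux_forall₂_trans {α : Type*} {R : α → α → Prop}
    (hR : ∀ a b c, R a b → R b c → R a c) :
    ∀ {l₁ l₂ l₃ : List α}, List.Forall₂ R l₁ l₂ → List.Forall₂ R l₂ l₃ →
      List.Forall₂ R l₁ l₃ := by
  intro l₁ l₂ l₃ h₁₂
  induction h₁₂ generalizing l₃ with
  | nil => intro h; exact h
  | cons hab h12 ih =>
    intro h
    cases h with
    | cons hbc h23 => exact List.Forall₂.cons (hR _ _ _ hab hbc) (ih h23)

lemma aux_unflatten {α β : Type*} {R : α → β → Prop} :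
    ∀ {L₁ : List (List α)} {L₂ : List (List β)},
      List.Forall₂ (fun a b => a.length = b.length) L₁ L₂ →
      List.Forall₂ R L₁.flatten L₂.flatten →
      List.Forall₂ (List.Forall₂ R) L₁ L₂ := by
  intro L₁ L₂ hlen
  induction hlen with
  | nil => intro _; exact List.Forall₂.nil
  | @cons a b L₁ L₂ hab hL ih =>
    intro h
    simp only [List.flatten_cons] at h
    have h₁ : List.Forall₂ R a b := by
      have := List.forall₂_take a.length h
      rwa [List.take_left, hab, List.take_left] at this
    have h₂ : List.Forall₂ R L₁.flatten L₂.flatten := by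
      have := List.forall₂_drop a.length h
      rwa [List.drop_left, hab, List.drop_left] at this
    exact List.Forall₂.cons h₁ (ih h₂)

lemma aux_leafLabels_length_skel {S : Signature} {X : Type} :
    ∀ t : Term S X, (leafLabels (skel t)).length = (leafLabels t).length := by
  intro t
  induction t with
  | var x => rfl
  | op f a ih =>
    by_cases hf : S.ar f = 0
    · simp [skel, leafLabels, hf]
    · simp only [skel, leafLabels, hf, if_neg hf, if_false, List.length_flatten,
        List.map_ofFn]
      congr 1
      simp only [Function.comp_def]
      exact congrArg List.ofFn (funext fun i => ih i)

lemma aux_labelLe_trans {S : Signature} {X : Type} [PartialOrder X]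
    {r : S.F → S.F → Prop} (hr_trans : ∀ c d e : S.F, r c d → r d e → r c e) :
    ∀ a b c : X ⊕ S.F, LabelLe r a b → LabelLe r b c → LabelLe r a c := by
  rintro (x | x) (y | y) (z | z) h₁ h₂ <;>
    first
    | exact h₁.elim
    | exact h₂.elim
    | exact le_trans h₁ h₂
    | exact hr_trans _ _ _ h₁ h₂

lemma aux_leafLabels_refl {S : Signature} {X : Type} [PartialOrder X]
    {r : S.F → S.F → Prop} (hr_refl : ∀ c : S.F, S.ar c = 0 → r c c) :
    ∀ t : Term S X, List.Forall₂ (LabelLe r) (leafLabels t) (leafLabels t) := by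
  intro t
  induction t with
  | var x => exact List.Forall₂.cons (le_refl x) List.Forall₂.nil
  | op f a ih =>
    by_cases hf : S.ar f = 0
    · simp only [leafLabels, if_pos hf]
      exact List.Forall₂.cons (hr_refl f hf) List.Forall₂.nil
    · simp only [leafLabels, if_neg hf]
      exact List.rel_flatten (aux_forall₂_ofFn ih)

end Aux

/-- Characterization of the order of the ordered term algebra: `t₁ ⪯ t₂` iff `t₁`
and `t₂` have the same skeleton and the `i`-th leaf label of `t₁` is below the
`i`-th leaf label of `t₂` for every leaf position `i`. -/
theorem genQuasi_iff_skel_and_leaves {S : Signature} {X : Type} [PartialOrder X]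
    (r : S.F → S.F → Prop)
    (hr_refl : ∀ c : S.F, S.ar c = 0 → r c c)
    (hr_trans : ∀ c d e : S.F, r c d → r d e → r c e)
    (hr_antisymm : ∀ c d : S.F, r c d → r d c → c = d) :
    ∀ t₁ t₂ : Term S X,
      GenQuasi S X (LeafLe S X r) t₁ t₂ ↔
        (skel t₁ = skel t₂ ∧ List.Forall₂ (LabelLe r) (leafLabels t₁) (leafLabels t₂)) := by
  intro t₁ t₂
  constructor
  · intro h
    induction h with
    | of hab =>
      cases hab with
      | var hxy =>
        exact ⟨rfl, List.Forall₂.cons hxy List.Forall₂.nil⟩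
      | const hc hd ac ad hcd =>
        refine ⟨?_, ?_⟩
        · simp [skel, hc, hd]
        · simp only [leafLabels, if_pos hc, if_pos hd]
          exact List.Forall₂.cons hcd List.Forall₂.nil
    | refl a => exact ⟨rfl, aux_leafLabels_refl hr_refl a⟩
    | trans _ _ ih₁ ih₂ =>
      exact ⟨ih₁.1.trans ih₂.1,
        aux_forall₂_trans (aux_labelLe_trans hr_trans) ih₁.2 ih₂.2⟩
    | compat f a b _ ih =>
      by_cases hf : S.ar f = 0
      · refine ⟨by simp [skel, hf], ?_⟩
        simp only [leafLabels, if_pos hf]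
        exact List.Forall₂.cons (hr_refl f hf) List.Forall₂.nil
      · refine ⟨?_, ?_⟩
        · simp only [skel, if_neg hf]
          exact congrArg _ (funext fun i => (ih i).1)
        · simp only [leafLabels, if_neg hf]
          exact List.rel_flatten (aux_forall₂_ofFn fun i => (ih i).2)
  · induction t₁ generalizing t₂ with
    | var x =>
      rintro ⟨hs, hl⟩
      cases t₂ with
      | var y =>
        simp only [leafLabels, List.forall₂_cons] at hl
        exact GenQuasi.of (LeafLe.var hl.1)
      | op g b =>
        by_cases hg : S.ar g = 0
        · simp only [leafLabels, if_pos hg, List.forall₂_cons] at hl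
          exact hl.1.elim
        · simp [skel, hg] at hs
    | op f a ih =>
      rintro ⟨hs, hl⟩
      by_cases hf : S.ar f = 0
      · cases t₂ with
        | var y =>
          simp only [leafLabels, if_pos hf, List.forall₂_cons] at hl
          exact hl.1.elim
        | op g b =>
          by_cases hg : S.ar g = 0
          · simp only [leafLabels, if_pos hf, if_pos hg, List.forall₂_cons] at hl
            exact GenQuasi.of (LeafLe.const hf hg a b hl.1)
          · simp [skel, hf, hg] at hs
      · cases t₂ with
        | var y => simp [skel, hf] at hs
        | op g b =>
          by_cases hg : S.ar g = 0
          · simp [skel, hf, hg] at hs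
          · simp only [skel, if_neg hf, if_neg hg] at hs
            injection hs with hfg hab
            subst hfg
            have hab' : ∀ i, skel (a i) = skel (b i) :=
              fun i => congrFun (eq_of_heq hab) i
            simp only [leafLabels, if_neg hf, if_neg hg] at hl
            have hlen : ∀ i, (leafLabels (a i)).length = (leafLabels (b i)).length := by
              intro i
              rw [← aux_leafLabels_length_skel (a i), ← aux_leafLabels_length_skel (b i),
                hab' i]
            have := aux_unflatten (aux_forall₂_ofFn hlen) hl
            have hcomp := aux_ofFn_forall₂ this
            exact GenQuasi.compat f a b fun i => ih i (b i) ⟨hab' i, hcomp i⟩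
end

section
/- Universal mapping property of the ordered term algebra: let F be a type of algebras, (X, ≤_X) a poset with X ∪ F₀ ≠ ∅, and suppose F₀ carries a partial order. For every ordered F-algebra D in the variety F-Oalg⁰_≤ defined by the inequalities c ≤ d for c ≤_{F₀} d, and every monotone map α : (X, ≤_X) → (D, ≤_D), there exists a unique homomorphism of ordered algebras β from the ordered term algebra T̂(X) to D extending α. -/
/-- The value in `D` of a constant (nullary operation) symbol `c`. -/
def nullOp {S : Signature} (D : OAlg S) (c : S.F) (h : S.ar c = 0) : D.carrier :=
  D.ops c (fun i => absurd i.isLt (by omega))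

/-- Universal mapping property of the ordered term algebra `T̂(X)` (the term
algebra ordered by the compatible quasiorder `Σ_≤` generated by
`≤_X ⊔ ≤_{F₀}`) for the variety `F-Oalg⁰_≤` of ordered algebras satisfying the
inequalities `c ≤ d` for `c ≤_{F₀} d`: every monotone map `α : X → D` extends
uniquely to a monotone homomorphism `β : T̂(X) → D`. -/
theorem ordered_term_algebra_ump {S : Signature} {X : Type} [PartialOrder X]
    (r : S.F → S.F → Prop)
    (hr_refl : ∀ c : S.F, S.ar c = 0 → r c c)
    (hr_trans : ∀ c d e : S.F, r c d → r d e → r c e)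
    (hr_antisymm : ∀ c d : S.F, r c d → r d c → c = d)
    (hne : Nonempty X ∨ ∃ c : S.F, S.ar c = 0)
    (D : OAlg S)
    (hD : ∀ (c d : S.F) (hc : S.ar c = 0) (hd : S.ar d = 0),
      r c d → D.le (nullOp D c hc) (nullOp D d hd))
    (α : X → D.carrier)
    (hα : ∀ x y : X, x ≤ y → D.le (α x) (α y)) :
    ∃! β : Term S X → D.carrier,
      (∀ (f : S.F) (a : Fin (S.ar f) → Term S X),
        β (.op f a) = D.ops f (fun i => β (a i))) ∧
      (∀ s t : Term S X, GenQuasi S X (LeafLe S X r) s t → D.le (β s) (β t)) ∧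
      (∀ x : X, β (.var x) = α x) := by
  classical
  refine ⟨(fun t => Term.rec (motive := fun _ => D.carrier) (fun x => α x)
      (fun f a ih => D.ops f ih) t), ⟨?_, ?_, ?_⟩, ?_⟩
  · intro f a; rfl
  · intro s t h
    induction h with
    | of h =>
      cases h with
      | var hxy => exact hα _ _ hxy
      | const hc hd ac ad hrcd =>
        have h1 : D.ops _ (fun i => Term.rec (fun x => α x) (fun f a ih => D.ops f ih) (ac i))
            = nullOp D _ hc := by
          unfold nullOp; congr 1; funext i; exact absurd i.isLt (by omega)
        have h2 : D.ops _ (fun i => Term.rec (fun x => α x) (fun f a ih => D.ops f ih) (ad i))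
            = nullOp D _ hd := by
          unfold nullOp; congr 1; funext i; exact absurd i.isLt (by omega)
        simp only [h1, h2] at *
        exact hD _ _ hc hd hrcd
    | refl a => exact D.le_refl _
    | trans _ _ ih1 ih2 => exact D.le_trans _ _ _ ih1 ih2
    | compat f a b _ ih => exact D.mono f _ _ ih
  · intro x; rfl
  · intro β ⟨hop, _, hvar⟩
    funext t
    induction t with
    | var x => exact hvar x
    | op f a ih => rw [hop]; exact congrArg _ (funext ih)
end

section
/- The variety F-Oalg⁰_≤ has pushouts of spans of order-embeddings: every amalgam (C; A, B; φ₁, φ₂), where φ₁ : C → A and φ₂ : C → B are order-embeddings of ordered F-algebras in F-Oalg⁰_≤ with A, B, C pairwise disjoint, can be completed to a pushout A ⨿_C B in F-Oalg⁰_≤. -/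
/-- An ordered algebra lies in the variety `F-Oalg⁰_≤` determined by a family `r`
of inequalities `c ≤ d` between constant symbols. -/
def SatIneq {S : Signature} (r : S.F → S.F → Prop) (D : OAlg S) : Prop :=
  ∀ (c d : S.F) (hc : S.ar c = 0) (hd : S.ar d = 0),
    r c d → D.le (nullOp D c hc) (nullOp D d hd)

/-- A homomorphism of ordered algebras is an order-embedding if it reflects the
order. -/
def IsOrderEmbedding {S : Signature} {A B : OAlg S} (f : OHom A B) : Prop :=
  ∀ x y : A.carrier, B.le (f.toFun x) (f.toFun y) → A.le x y

/-- `(P, μ₁, μ₂)` is a pushout of the span `(φ₁, φ₂)` in the variety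
`F-Oalg⁰_≤` determined by `r`. -/
def IsPushout {S : Signature} (r : S.F → S.F → Prop) {C A B : OAlg S}
    (φ₁ : OHom C A) (φ₂ : OHom C B)
    (P : OAlg S) (μ₁ : OHom A P) (μ₂ : OHom B P) : Prop :=
  SatIneq r P ∧
  (∀ c : C.carrier, μ₁.toFun (φ₁.toFun c) = μ₂.toFun (φ₂.toFun c)) ∧
  ∀ D : OAlg S, SatIneq r D → ∀ (γA : OHom A D) (γB : OHom B D),
    (∀ c : C.carrier, γA.toFun (φ₁.toFun c) = γB.toFun (φ₂.toFun c)) →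
    ∃! δ : OHom P D,
      (∀ a : A.carrier, δ.toFun (μ₁.toFun a) = γA.toFun a) ∧
      (∀ b : B.carrier, δ.toFun (μ₂.toFun b) = γB.toFun b)

/-!
`A ⨿_C B` is the algebra of terms over `A ⊕ B` modulo the least compatible preorder containing
the orders of `A` and `B`, their operation tables and the gluing `φ₁ c ~ φ₂ c`. For a compatible
pair `γA, γB`, evaluating terms along `[γA, γB]` is monotone for this preorder, which gives the
mediating map; it is unique because the pushout is generated by the images of `A` and `B`. The
inequalities between constants hold in `A`, hence in every algebra receiving a homomorphism
from `A`, in particular in the pushout.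
-/

namespace Signature

inductive Term (S : Signature) (V : Type) : Type
  | var : V → S.Term V
  | op : (f : S.F) → (Fin (S.ar f) → S.Term V) → S.Term V

def Term.eval {S : Signature} {V : Type} (D : OAlg S) (v : V → D.carrier) :
    S.Term V → D.carrier
  | .var x => v x
  | .op f a => D.ops f fun i => (a i).eval D v

end Signature

section Homomorphisms

variable {S : Signature} {A D : OAlg S}

theorem OHom.ext {f g : OHom A D} (h : ∀ x, f.toFun x = g.toFun x) : f = g := by
  cases f; cases g; congr; exact funext h

theorem OHom.map_nullOp (h : OHom A D) (c : S.F) (hc : S.ar c = 0) :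
    h.toFun (nullOp A c hc) = nullOp D c hc := by
  rw [nullOp, h.map_ops, nullOp]
  congr; funext i
  exact absurd i.isLt (by omega)

/-- The defining inequalities only involve constants, so they pass along any homomorphism. -/
theorem SatIneq.of_hom {r : S.F → S.F → Prop} (hA : SatIneq r A) (h : OHom A D) :
    SatIneq r D := by
  intro c d hc hd hcd
  rw [← h.map_nullOp c hc, ← h.map_nullOp d hd]
  exact h.mono _ _ (hA c d hc hd hcd)

end Homomorphisms

open Signature

namespace Amalgam

variable {S : Signature} {C A B : OAlg S}

/-- By compatibility, identifying each single operation on elements of `A` (resp. `B`) with its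
value already identifies every term over `A` (resp. `B`) with its value. -/
inductive Le (φ₁ : OHom C A) (φ₂ : OHom C B) :
    S.Term (A.carrier ⊕ B.carrier) → S.Term (A.carrier ⊕ B.carrier) → Prop
  | refl (t) : Le φ₁ φ₂ t t
  | trans {t u v} : Le φ₁ φ₂ t u → Le φ₁ φ₂ u v → Le φ₁ φ₂ t v
  | op_mono (f) {a b : Fin (S.ar f) → S.Term (A.carrier ⊕ B.carrier)} :
      (∀ i, Le φ₁ φ₂ (a i) (b i)) → Le φ₁ φ₂ (.op f a) (.op f b)
  | inl_mono {x y} : A.le x y → Le φ₁ φ₂ (.var (.inl x)) (.var (.inl y))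
  | inr_mono {x y} : B.le x y → Le φ₁ φ₂ (.var (.inr x)) (.var (.inr y))
  | op_inl_le (f) (a : Fin (S.ar f) → A.carrier) :
      Le φ₁ φ₂ (.op f fun i => .var (.inl (a i))) (.var (.inl (A.ops f a)))
  | inl_le_op (f) (a : Fin (S.ar f) → A.carrier) :
      Le φ₁ φ₂ (.var (.inl (A.ops f a))) (.op f fun i => .var (.inl (a i)))
  | op_inr_le (f) (b : Fin (S.ar f) → B.carrier) :
      Le φ₁ φ₂ (.op f fun i => .var (.inr (b i))) (.var (.inr (B.ops f b)))
  | inr_le_op (f) (b : Fin (S.ar f) → B.carrier) :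
      Le φ₁ φ₂ (.var (.inr (B.ops f b))) (.op f fun i => .var (.inr (b i)))
  | inl_le_inr (c) : Le φ₁ φ₂ (.var (.inl (φ₁.toFun c))) (.var (.inr (φ₂.toFun c)))
  | inr_le_inl (c) : Le φ₁ φ₂ (.var (.inr (φ₂.toFun c))) (.var (.inl (φ₁.toFun c)))

variable (φ₁ : OHom C A) (φ₂ : OHom C B)

instance : IsPreorder (S.Term (A.carrier ⊕ B.carrier)) (Le φ₁ φ₂) where
  refl := Le.refl
  trans _ _ _ := Le.trans

noncomputable def pushout : OAlg S where
  carrier := Antisymmetrization _ (Le φ₁ φ₂)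
  ops f a := toAntisymmetrization _ (.op f fun i => ofAntisymmetrization _ (a i))
  le := Quotient.lift₂ (Le φ₁ φ₂) fun _ _ _ _ h₁ h₂ =>
    propext ⟨fun h => h₁.2.trans (h.trans h₂.1), fun h => h₁.1.trans (h.trans h₂.2)⟩
  le_refl := Antisymmetrization.ind _ Le.refl
  le_trans := by rintro ⟨t⟩ ⟨u⟩ ⟨v⟩; exact Le.trans
  le_antisymm := by rintro ⟨t⟩ ⟨u⟩ htu hut; exact Quotient.sound ⟨htu, hut⟩
  mono f a b h := Le.op_mono f fun i => by
    have hi := h i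
    rwa [← toAntisymmetrization_ofAntisymmetrization _ (a i),
      ← toAntisymmetrization_ofAntisymmetrization _ (b i)] at hi

def mk (t : S.Term (A.carrier ⊕ B.carrier)) : (pushout φ₁ φ₂).carrier :=
  toAntisymmetrization _ t

theorem mk_surjective : Function.Surjective (mk φ₁ φ₂) :=
  Quotient.mk_surjective

theorem pushout_ops_mk (f : S.F) (t : Fin (S.ar f) → S.Term (A.carrier ⊕ B.carrier)) :
    (pushout φ₁ φ₂).ops f (fun i => mk φ₁ φ₂ (t i)) = mk φ₁ φ₂ (.op f t) := by
  have h i : AntisymmRel (Le φ₁ φ₂) (ofAntisymmetrization _ (mk φ₁ φ₂ (t i))) (t i) :=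
    Quotient.mk_out (s := AntisymmRel.setoid _ (Le φ₁ φ₂)) (t i)
  exact Quotient.sound ⟨Le.op_mono f fun i => (h i).1, Le.op_mono f fun i => (h i).2⟩

noncomputable def inl : OHom A (pushout φ₁ φ₂) where
  toFun a := mk φ₁ φ₂ (.var (.inl a))
  map_ops f a := by
    rw [pushout_ops_mk]
    exact Quotient.sound ⟨Le.inl_le_op f a, Le.op_inl_le f a⟩
  mono _ _ := Le.inl_mono

noncomputable def inr : OHom B (pushout φ₁ φ₂) where
  toFun b := mk φ₁ φ₂ (.var (.inr b))
  map_ops f b := by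
    rw [pushout_ops_mk]
    exact Quotient.sound ⟨Le.inr_le_op f b, Le.op_inr_le f b⟩
  mono _ _ := Le.inr_mono

theorem inl_comp_eq_inr_comp (c : C.carrier) :
    (inl φ₁ φ₂).toFun (φ₁.toFun c) = (inr φ₁ φ₂).toFun (φ₂.toFun c) :=
  Quotient.sound ⟨Le.inl_le_inr c, Le.inr_le_inl c⟩

variable {φ₁ φ₂} {D : OAlg S} {γA : OHom A D} {γB : OHom B D}

theorem Le.eval_le (hγ : ∀ c, γA.toFun (φ₁.toFun c) = γB.toFun (φ₂.toFun c))
    {t u : S.Term (A.carrier ⊕ B.carrier)} (h : Le φ₁ φ₂ t u) :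
    D.le (t.eval D (Sum.elim γA.toFun γB.toFun)) (u.eval D (Sum.elim γA.toFun γB.toFun)) := by
  induction h with
  | refl t => exact D.le_refl _
  | trans _ _ ih ih' => exact D.le_trans _ _ _ ih ih'
  | op_mono f _ ih => exact D.mono f _ _ ih
  | inl_mono h => exact γA.mono _ _ h
  | inr_mono h => exact γB.mono _ _ h
  | op_inl_le f a | inl_le_op f a =>
    simp only [Term.eval, Sum.elim_inl, γA.map_ops]; exact D.le_refl _
  | op_inr_le f b | inr_le_op f b =>
    simp only [Term.eval, Sum.elim_inr, γB.map_ops]; exact D.le_refl _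
  | inl_le_inr c | inr_le_inl c =>
    simp only [Term.eval, Sum.elim_inl, Sum.elim_inr, hγ c]; exact D.le_refl _

variable (γA γB) in
noncomputable def desc (hγ : ∀ c, γA.toFun (φ₁.toFun c) = γB.toFun (φ₂.toFun c)) :
    OHom (pushout φ₁ φ₂) D where
  toFun := Quotient.lift (Term.eval D (Sum.elim γA.toFun γB.toFun)) fun _ _ h =>
    D.le_antisymm _ _ (h.1.eval_le hγ) (h.2.eval_le hγ)
  map_ops f a := by
    change D.ops f _ = D.ops f _
    congr; funext i
    exact congrArg (Quotient.lift _ _) (toAntisymmetrization_ofAntisymmetrization _ (a i))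
  mono := by
    rintro ⟨t⟩ ⟨u⟩ h
    exact h.eval_le hγ

theorem hom_ext {δ δ' : OHom (pushout φ₁ φ₂) D}
    (hA : ∀ a, δ.toFun ((inl φ₁ φ₂).toFun a) = δ'.toFun ((inl φ₁ φ₂).toFun a))
    (hB : ∀ b, δ.toFun ((inr φ₁ φ₂).toFun b) = δ'.toFun ((inr φ₁ φ₂).toFun b)) :
    δ = δ' := by
  refine OHom.ext fun x => ?_
  obtain ⟨t, rfl⟩ := mk_surjective φ₁ φ₂ x
  induction t with
  | var x =>
    cases x with
    | inl a => exact hA a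
    | inr b => exact hB b
  | op f ts ih =>
    rw [← pushout_ops_mk, δ.map_ops, δ'.map_ops]
    congr; funext i
    exact ih i

end Amalgam

open Amalgam in
theorem amalgam_pushout_exists_general {S : Signature} (r : S.F → S.F → Prop)
    (C A B : OAlg S) (hA : SatIneq r A)
    (φ₁ : OHom C A) (φ₂ : OHom C B) :
    ∃ (P : OAlg S) (μ₁ : OHom A P) (μ₂ : OHom B P),
      IsPushout r φ₁ φ₂ P μ₁ μ₂ :=
  ⟨pushout φ₁ φ₂, inl φ₁ φ₂, inr φ₁ φ₂, hA.of_hom (inl φ₁ φ₂), inl_comp_eq_inr_comp φ₁ φ₂,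
    fun _ _ γA γB hγ => ⟨desc γA γB hγ, ⟨fun _ => rfl, fun _ => rfl⟩,
      fun _ hδ => hom_ext hδ.1 hδ.2⟩⟩

/-- The variety `F-Oalg⁰_≤` has pushouts of spans of order-embeddings: every
amalgam `(C; A, B; φ₁, φ₂)` of ordered algebras in the variety can be completed
to a pushout `A ⨿_C B` in the variety. -/
theorem amalgam_pushout_exists {S : Signature} (r : S.F → S.F → Prop)
    (C A B : OAlg S) (hC : SatIneq r C) (hA : SatIneq r A) (hB : SatIneq r B)
    (φ₁ : OHom C A) (φ₂ : OHom C B)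
    (h₁ : IsOrderEmbedding φ₁) (h₂ : IsOrderEmbedding φ₂) :
    ∃ (P : OAlg S) (μ₁ : OHom A P) (μ₂ : OHom B P),
      IsPushout r φ₁ φ₂ P μ₁ μ₂ :=
  amalgam_pushout_exists_general r C A B hA φ₁ φ₂
end

section
/- Let (C; A₁, A₂; φ₁, φ₂) be a special amalgam arising from isomorphisms α_i : A → A_i (i = 1, 2) of ordered algebras with C a subalgebra of A and φ_i = α_i restricted to C, and let μ₁, μ₂ be the pushout maps into A₁ ⨿_C A₂. If μ₁(x₁) = μ₂(x₂) for some x₁ ∈ A₁ and x₂ ∈ A₂, then there exists x ∈ A with x₁ = α₁(x) and x₂ = α₂(x). -/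
/-- A homomorphism of ordered algebras is an isomorphism iff it is a surjective
order-embedding. -/
def IsOrderIso {S : Signature} {A B : OAlg S} (f : OHom A B) : Prop :=
  Function.Surjective f.toFun ∧ IsOrderEmbedding f

/-- Inverse of an order isomorphism, as an ordered-algebra homomorphism. -/
noncomputable def orderIsoInv {S : Signature} {A B : OAlg S} (f : OHom A B)
    (hf : IsOrderIso f) : OHom B A where
  toFun := Function.surjInv hf.1
  map_ops := by
    intro g a
    have hinj : Function.Injective f.toFun := by
      intro x y hxy
      exact A.le_antisymm x y (hf.2 x y (hxy ▸ B.le_refl _)) (hf.2 y x (hxy ▸ B.le_refl _))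
    apply hinj
    rw [Function.surjInv_eq hf.1, f.map_ops]
    congr 1
    funext i
    rw [Function.surjInv_eq hf.1]
  mono := by
    intro x y hxy
    apply hf.2
    rw [Function.surjInv_eq hf.1, Function.surjInv_eq hf.1]
    exact hxy

theorem orderIsoInv_left {S : Signature} {A B : OAlg S} (f : OHom A B)
    (hf : IsOrderIso f) (x : A.carrier) : (orderIsoInv f hf).toFun (f.toFun x) = x := by
  have hinj : Function.Injective f.toFun := by
    intro x y hxy
    exact A.le_antisymm x y (hf.2 x y (hxy ▸ B.le_refl _)) (hf.2 y x (hxy ▸ B.le_refl _))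
  apply hinj
  exact Function.surjInv_eq hf.1 _

theorem orderIsoInv_right {S : Signature} {A B : OAlg S} (f : OHom A B)
    (hf : IsOrderIso f) (y : B.carrier) : f.toFun ((orderIsoInv f hf).toFun y) = y :=
  Function.surjInv_eq hf.1 y

/-- For the special amalgam `(C; A₁, A₂; φ₁, φ₂)` arising from a subalgebra
`ι : C ↪ A` and two isomorphic copies `αᵢ : A ≅ Aᵢ` with `φᵢ = αᵢ ∘ ι`, if the
pushout maps satisfy `μ₁ x₁ = μ₂ x₂`, then `x₁` and `x₂` come from a common
element of `A`: `x₁ = α₁ x` and `x₂ = α₂ x` for some `x ∈ A`. -/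
theorem special_amalgam_pushout_meet {S : Signature} (r : S.F → S.F → Prop)
    (C A A₁ A₂ : OAlg S)
    (hC : SatIneq r C) (hA : SatIneq r A) (hA₁ : SatIneq r A₁) (hA₂ : SatIneq r A₂)
    (ι : OHom C A) (hι : IsOrderEmbedding ι)
    (α₁ : OHom A A₁) (α₂ : OHom A A₂) (hα₁ : IsOrderIso α₁) (hα₂ : IsOrderIso α₂)
    (φ₁ : OHom C A₁) (φ₂ : OHom C A₂)
    (hφ₁ : ∀ c : C.carrier, φ₁.toFun c = α₁.toFun (ι.toFun c))
    (hφ₂ : ∀ c : C.carrier, φ₂.toFun c = α₂.toFun (ι.toFun c))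
    (P : OAlg S) (μ₁ : OHom A₁ P) (μ₂ : OHom A₂ P)
    (hP : IsPushout r φ₁ φ₂ P μ₁ μ₂) :
    ∀ (x₁ : A₁.carrier) (x₂ : A₂.carrier),
      μ₁.toFun x₁ = μ₂.toFun x₂ →
      ∃ x : A.carrier, x₁ = α₁.toFun x ∧ x₂ = α₂.toFun x := by
  intro x₁ x₂ hx
  obtain ⟨hPsat, hcomm, huniv⟩ := hP
  set β₁ := orderIsoInv α₁ hα₁
  set β₂ := orderIsoInv α₂ hα₂
  have hcone : ∀ c : C.carrier, β₁.toFun (φ₁.toFun c) = β₂.toFun (φ₂.toFun c) := by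
    intro c
    rw [hφ₁, hφ₂, orderIsoInv_left, orderIsoInv_left]
  obtain ⟨δ, ⟨hδ₁, hδ₂⟩, -⟩ := huniv A hA β₁ β₂ hcone
  refine ⟨β₁.toFun x₁, ?_, ?_⟩
  · rw [orderIsoInv_right]
  · have : β₁.toFun x₁ = β₂.toFun x₂ := by
      rw [← hδ₁, ← hδ₂, hx]
    rw [this, orderIsoInv_right]
end

section
/- In the setting of a special amalgam (C; A₁, A₂; φ₁, φ₂) with isomorphisms α_i : A → A_i and pushout maps μ_i : A_i → A₁ ⨿_C A₂, the dominion of C in A is isomorphic to the dominion of φ_i(C) in A_i, and this equals μ_i⁻¹[μ₁(A₁) ∩ μ₂(A₂)] for i = 1, 2. -/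
/-- The dominion (within the variety `F-Oalg⁰_≤` determined by `r`) of the image
of `ι : C → A` in `A`: all `d ∈ A` on which every pair of homomorphisms out of
`A` agreeing on the image of `ι` agree. -/
def Dominion {S : Signature} (r : S.F → S.F → Prop) {C A : OAlg S} (ι : OHom C A) :
    Set A.carrier :=
  {d | ∀ D : OAlg S, SatIneq r D → ∀ f g : OHom A D,
    (∀ c : C.carrier, f.toFun (ι.toFun c) = g.toFun (ι.toFun c)) →
    f.toFun d = g.toFun d}


def OHom.comp {S : Signature} {A B C : OAlg S} (g : OHom B C) (f : OHom A B) :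
    OHom A C where
  toFun := fun x => g.toFun (f.toFun x)
  map_ops := by intro op a; show g.toFun (f.toFun _) = _; rw [f.map_ops, g.map_ops]
  mono := fun x y h => g.mono _ _ (f.mono _ _ h)

lemma IsOrderIso.exists_inv {S : Signature} {A B : OAlg S} {f : OHom A B}
    (h : IsOrderIso f) :
    ∃ g : OHom B A, (∀ x, g.toFun (f.toFun x) = x) ∧ (∀ y, f.toFun (g.toFun y) = y) := by
  obtain ⟨hsurj, hemb⟩ := h
  have hinj : Function.Injective f.toFun := by
    intro x y hxy
    exact A.le_antisymm _ _ (hemb _ _ (hxy ▸ B.le_refl _)) (hemb _ _ (hxy ▸ B.le_refl _))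
  set g := Function.surjInv hsurj with hg
  have hfg : ∀ y, f.toFun (g y) = y := Function.surjInv_eq hsurj
  have hgf : ∀ x, g (f.toFun x) = x := fun x => hinj (hfg _)
  refine ⟨⟨g, ?_, ?_⟩, hgf, hfg⟩
  · intro op a
    apply hinj
    rw [hfg, f.map_ops]
    congr 1; funext i; rw [hfg]
  · intro x y hxy
    apply hemb
    rw [hfg, hfg]; exact hxy

lemma IsPushout.symm' {S : Signature} {r : S.F → S.F → Prop} {C A B : OAlg S}
    {φ₁ : OHom C A} {φ₂ : OHom C B} {P : OAlg S} {μ₁ : OHom A P} {μ₂ : OHom B P}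
    (hP : IsPushout r φ₁ φ₂ P μ₁ μ₂) : IsPushout r φ₂ φ₁ P μ₂ μ₁ := by
  obtain ⟨h1, h2, h3⟩ := hP
  refine ⟨h1, fun c => (h2 c).symm, ?_⟩
  intro D hD γB γA hcomp
  obtain ⟨δ, ⟨hδ1, hδ2⟩, huniq⟩ := h3 D hD γA γB (fun c => (hcomp c).symm)
  exact ⟨δ, ⟨hδ2, hδ1⟩, fun δ' hδ' => huniq δ' ⟨hδ'.2, hδ'.1⟩⟩

lemma dominion_image_aux {S : Signature} (r : S.F → S.F → Prop) {C A A₁ : OAlg S}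
    (ι : OHom C A) (α : OHom A A₁) (α' : OHom A₁ A)
    (h1 : ∀ x, α'.toFun (α.toFun x) = x) (h2 : ∀ y, α.toFun (α'.toFun y) = y)
    (φ : OHom C A₁) (hφ : ∀ c, φ.toFun c = α.toFun (ι.toFun c)) :
    α.toFun '' Dominion r ι = Dominion r φ := by
  ext y; constructor
  · rintro ⟨x, hx, rfl⟩ D hD f g hfg
    exact hx D hD (f.comp α) (g.comp α) (fun c => by
      show f.toFun (α.toFun (ι.toFun c)) = g.toFun (α.toFun (ι.toFun c))
      rw [← hφ c]; exact hfg c)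
  · intro hy
    refine ⟨α'.toFun y, ?_, h2 y⟩
    intro D hD f g hfg
    exact hy D hD (f.comp α') (g.comp α') (fun c => by
      show f.toFun (α'.toFun (φ.toFun c)) = g.toFun (α'.toFun (φ.toFun c))
      rw [hφ, h1]; exact hfg c)

lemma dominion_eq_half {S : Signature} {r : S.F → S.F → Prop} {C A₁ A₂ : OAlg S}
    {φ₁ : OHom C A₁} {φ₂ : OHom C A₂} {P : OAlg S} {μ₁ : OHom A₁ P} {μ₂ : OHom A₂ P}
    (hP : IsPushout r φ₁ φ₂ P μ₁ μ₂)
    (θ : OHom A₂ A₁) (θ' : OHom A₁ A₂)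
    (hθθ' : ∀ x, θ.toFun (θ'.toFun x) = x)
    (hθ : ∀ c, θ.toFun (φ₂.toFun c) = φ₁.toFun c)
    (hθ' : ∀ c, θ'.toFun (φ₁.toFun c) = φ₂.toFun c) :
    Dominion r φ₁ = μ₁.toFun ⁻¹' (Set.range μ₁.toFun ∩ Set.range μ₂.toFun) := by
  ext a₁
  constructor
  · intro ha
    refine ⟨⟨a₁, rfl⟩, θ'.toFun a₁, ?_⟩
    have := ha P hP.1 μ₁ (μ₂.comp θ') (fun c => by
      show μ₁.toFun (φ₁.toFun c) = μ₂.toFun (θ'.toFun (φ₁.toFun c))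
      rw [hθ' c]; exact hP.2.1 c)
    exact this.symm
  · rintro ⟨-, a₂, ha₂⟩ D hD f g hfg
    obtain ⟨δ1, ⟨hδ1a, hδ1b⟩, -⟩ := hP.2.2 D hD f (g.comp θ) (fun c => by
      show f.toFun (φ₁.toFun c) = g.toFun (θ.toFun (φ₂.toFun c))
      rw [hθ c]; exact hfg c)
    obtain ⟨δ2, ⟨hδ2a, hδ2b⟩, -⟩ := hP.2.2 D hD g (g.comp θ) (fun c => by
      show g.toFun (φ₁.toFun c) = g.toFun (θ.toFun (φ₂.toFun c))
      rw [hθ c])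
    have e1 : f.toFun a₁ = g.toFun (θ.toFun a₂) := by
      rw [← hδ1a a₁, ← ha₂, hδ1b a₂]; rfl
    have e2 : g.toFun a₁ = g.toFun (θ.toFun a₂) := by
      rw [← hδ2a a₁, ← ha₂, hδ2b a₂]; rfl
    rw [e1, e2]

/-- For the special amalgam arising from a subalgebra `ι : C ↪ A` and isomorphic
copies `αᵢ : A ≅ Aᵢ` with `φᵢ = αᵢ ∘ ι` and pushout maps `μᵢ : Aᵢ → A₁ ⨿_C A₂`:
the dominion of `C` in `A` is isomorphic (via `αᵢ`) to the dominion of `φᵢ(C)`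
in `Aᵢ`, and the latter equals `μᵢ⁻¹[μ₁(A₁) ∩ μ₂(A₂)]`, for `i = 1, 2`. -/
theorem dominion_eq_pushout_intersection {S : Signature} (r : S.F → S.F → Prop)
    (C A A₁ A₂ : OAlg S)
    (hC : SatIneq r C) (hA : SatIneq r A) (hA₁ : SatIneq r A₁) (hA₂ : SatIneq r A₂)
    (ι : OHom C A) (hι : IsOrderEmbedding ι)
    (α₁ : OHom A A₁) (α₂ : OHom A A₂) (hα₁ : IsOrderIso α₁) (hα₂ : IsOrderIso α₂)
    (φ₁ : OHom C A₁) (φ₂ : OHom C A₂)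
    (hφ₁ : ∀ c : C.carrier, φ₁.toFun c = α₁.toFun (ι.toFun c))
    (hφ₂ : ∀ c : C.carrier, φ₂.toFun c = α₂.toFun (ι.toFun c))
    (P : OAlg S) (μ₁ : OHom A₁ P) (μ₂ : OHom A₂ P)
    (hP : IsPushout r φ₁ φ₂ P μ₁ μ₂) :
    (α₁.toFun '' Dominion r ι = Dominion r φ₁) ∧
    (α₂.toFun '' Dominion r ι = Dominion r φ₂) ∧
    (Dominion r φ₁ = μ₁.toFun ⁻¹' (Set.range μ₁.toFun ∩ Set.range μ₂.toFun)) ∧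
    (Dominion r φ₂ = μ₂.toFun ⁻¹' (Set.range μ₁.toFun ∩ Set.range μ₂.toFun)) := by
  obtain ⟨α₁', hα₁'l, hα₁'r⟩ := hα₁.exists_inv
  obtain ⟨α₂', hα₂'l, hα₂'r⟩ := hα₂.exists_inv
  -- θ : A₂ → A₁ and θ' : A₁ → A₂
  set θ : OHom A₂ A₁ := α₁.comp α₂' with hθdef
  set θ' : OHom A₁ A₂ := α₂.comp α₁' with hθ'def
  have hθθ' : ∀ x, θ.toFun (θ'.toFun x) = x := fun x => by
    show α₁.toFun (α₂'.toFun (α₂.toFun (α₁'.toFun x))) = x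
    rw [hα₂'l, hα₁'r]
  have hθ'θ : ∀ x, θ'.toFun (θ.toFun x) = x := fun x => by
    show α₂.toFun (α₁'.toFun (α₁.toFun (α₂'.toFun x))) = x
    rw [hα₁'l, hα₂'r]
  have hθc : ∀ c, θ.toFun (φ₂.toFun c) = φ₁.toFun c := fun c => by
    show α₁.toFun (α₂'.toFun (φ₂.toFun c)) = φ₁.toFun c
    rw [hφ₂ c, hα₂'l, hφ₁ c]
  have hθ'c : ∀ c, θ'.toFun (φ₁.toFun c) = φ₂.toFun c := fun c => by
    show α₂.toFun (α₁'.toFun (φ₁.toFun c)) = φ₂.toFun c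
    rw [hφ₁ c, hα₁'l, hφ₂ c]
  refine ⟨dominion_image_aux r ι α₁ α₁' hα₁'l hα₁'r φ₁ hφ₁,
    dominion_image_aux r ι α₂ α₂' hα₂'l hα₂'r φ₂ hφ₂,
    dominion_eq_half hP θ θ' hθθ' hθc hθ'c, ?_⟩
  have := dominion_eq_half hP.symm' θ' θ hθ'θ hθ'c hθc
  rw [this, Set.inter_comm]
end

section
/- Let C be a subalgebra of an ordered F-algebra A, and let (C; A₁, A₂; φ₁, φ₂) be the associated special amalgam with pushout maps μ₁, μ₂. The following are equivalent: (1) the special amalgam is embeddable; (2) μ_i⁻¹[μ₁(A₁) ∩ μ₂(A₂)] = φ_i(C) for i = 1, 2; (3) the dominion of φ_i(C) in A_i equals φ_i(C); (4) C is closed in A, i.e., the dominion of C in A equals C. -/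
section Aux
variable {S : Signature}

def ohomComp {A B C : OAlg S} (g : OHom B C) (f : OHom A B) : OHom A C where
  toFun := fun x => g.toFun (f.toFun x)
  map_ops := fun op a => by
    show g.toFun (f.toFun (A.ops op a)) = _
    rw [f.map_ops, g.map_ops]
  mono := fun x y h => g.mono _ _ (f.mono _ _ h)

lemma iso_inj {A B : OAlg S} (f : OHom A B) (h : IsOrderIso f) :
    Function.Injective f.toFun := fun x y hxy =>
  A.le_antisymm x y (h.2 x y (by rw [hxy]; exact B.le_refl _))
    (h.2 y x (by rw [hxy]; exact B.le_refl _))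

noncomputable def invHom {A B : OAlg S} (f : OHom A B) (h : IsOrderIso f) : OHom B A where
  toFun := Function.surjInv h.1
  map_ops := by
    intro op b
    apply iso_inj f h
    rw [Function.surjInv_eq h.1 _, f.map_ops]
    congr 1
    funext i
    rw [Function.surjInv_eq h.1 _]
  mono := by
    intro x y hxy
    apply h.2
    rw [Function.surjInv_eq h.1 x, Function.surjInv_eq h.1 y]
    exact hxy

lemma invHom_right {A B : OAlg S} (f : OHom A B) (h : IsOrderIso f) (x : B.carrier) :
    f.toFun ((invHom f h).toFun x) = x := Function.surjInv_eq h.1 x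

lemma invHom_left {A B : OAlg S} (f : OHom A B) (h : IsOrderIso f) (x : A.carrier) :
    (invHom f h).toFun (f.toFun x) = x :=
  iso_inj f h (by rw [invHom_right])

end Aux

section Aux2
variable {S : Signature}

lemma pushout_symm {r : S.F → S.F → Prop} {C A B P : OAlg S}
    {φ₁ : OHom C A} {φ₂ : OHom C B} {μ₁ : OHom A P} {μ₂ : OHom B P}
    (h : IsPushout r φ₁ φ₂ P μ₁ μ₂) : IsPushout r φ₂ φ₁ P μ₂ μ₁ := by
  obtain ⟨h1, h2, h3⟩ := h
  refine ⟨h1, fun c => (h2 c).symm, fun D hD γB γA hag => ?_⟩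
  obtain ⟨δ, ⟨hδ1, hδ2⟩, huniq⟩ := h3 D hD γA γB (fun c => (hag c).symm)
  exact ⟨δ, ⟨hδ2, hδ1⟩, fun δ' h' => huniq δ' ⟨h'.2, h'.1⟩⟩

/-- The dominion of `φ₁(C)` in `A₁` equals `μ₁⁻¹(μ₂(A₂))`. -/
lemma dominion_eq_preimage {r : S.F → S.F → Prop} {C A A₁ A₂ : OAlg S}
    (ι : OHom C A)
    (α₁ : OHom A A₁) (α₂ : OHom A A₂) (hα₁ : IsOrderIso α₁) (hα₂ : IsOrderIso α₂)
    (φ₁ : OHom C A₁) (φ₂ : OHom C A₂)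
    (hφ₁ : ∀ c : C.carrier, φ₁.toFun c = α₁.toFun (ι.toFun c))
    (hφ₂ : ∀ c : C.carrier, φ₂.toFun c = α₂.toFun (ι.toFun c))
    (P : OAlg S) (μ₁ : OHom A₁ P) (μ₂ : OHom A₂ P)
    (hP : IsPushout r φ₁ φ₂ P μ₁ μ₂) :
    Dominion r φ₁ = μ₁.toFun ⁻¹' (Set.range μ₂.toFun) := by
  -- β : A₂ → A₁, β' : A₁ → A₂ swapping the copies
  set β : OHom A₂ A₁ := ohomComp α₁ (invHom α₂ hα₂) with hβ
  set β' : OHom A₁ A₂ := ohomComp α₂ (invHom α₁ hα₁) with hβ'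
  have hβφ : ∀ c, β.toFun (φ₂.toFun c) = φ₁.toFun c := by
    intro c
    show α₁.toFun ((invHom α₂ hα₂).toFun (φ₂.toFun c)) = _
    rw [hφ₂ c, invHom_left, hφ₁ c]
  have hβ'φ : ∀ c, β'.toFun (φ₁.toFun c) = φ₂.toFun c := by
    intro c
    show α₂.toFun ((invHom α₁ hα₁).toFun (φ₁.toFun c)) = _
    rw [hφ₁ c, invHom_left, hφ₂ c]
  apply Set.Subset.antisymm
  · -- Dominion ⊆ preimage
    intro d hd
    have h := hd P hP.1 μ₁ (ohomComp μ₂ β') (fun c => by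
      show μ₁.toFun (φ₁.toFun c) = μ₂.toFun (β'.toFun (φ₁.toFun c))
      rw [hβ'φ c]; exact hP.2.1 c)
    exact ⟨β'.toFun d, h.symm⟩
  · -- preimage ⊆ Dominion
    rintro d ⟨b, hb⟩
    intro D hD f g hag
    obtain ⟨δ, ⟨hδ1, hδ2⟩, -⟩ := hP.2.2 D hD f (ohomComp f β) (fun c => by
      show f.toFun (φ₁.toFun c) = f.toFun (β.toFun (φ₂.toFun c))
      rw [hβφ c])
    obtain ⟨δ', ⟨hδ1', hδ2'⟩, -⟩ := hP.2.2 D hD g (ohomComp f β) (fun c => by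
      show g.toFun (φ₁.toFun c) = f.toFun (β.toFun (φ₂.toFun c))
      rw [hβφ c]; exact (hag c).symm)
    have e1 : f.toFun d = f.toFun (β.toFun b) := by
      rw [← hδ1 d, ← hb]; exact hδ2 b
    have e2 : g.toFun d = f.toFun (β.toFun b) := by
      rw [← hδ1' d, ← hb]; exact hδ2' b
    rw [e1, e2]

/-- Dominion transports along the isomorphism `α₁`. -/
lemma dominion_transport {r : S.F → S.F → Prop} {C A A₁ : OAlg S}
    (ι : OHom C A) (α₁ : OHom A A₁) (hα₁ : IsOrderIso α₁)
    (φ₁ : OHom C A₁)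
    (hφ₁ : ∀ c : C.carrier, φ₁.toFun c = α₁.toFun (ι.toFun c))
    (d : A.carrier) :
    d ∈ Dominion r ι ↔ α₁.toFun d ∈ Dominion r φ₁ := by
  constructor
  · intro hd D hD f g hag
    exact hd D hD (ohomComp f α₁) (ohomComp g α₁) (fun c => by
      show f.toFun (α₁.toFun (ι.toFun c)) = g.toFun (α₁.toFun (ι.toFun c))
      rw [← hφ₁ c]; exact hag c)
  · intro hd D hD f g hag
    have h := hd D hD (ohomComp f (invHom α₁ hα₁)) (ohomComp g (invHom α₁ hα₁)) (fun c => by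
      show f.toFun ((invHom α₁ hα₁).toFun (φ₁.toFun c)) =
        g.toFun ((invHom α₁ hα₁).toFun (φ₁.toFun c))
      rw [hφ₁ c, invHom_left]; exact hag c)
    simpa [ohomComp, invHom_left] using h

lemma range_subset_dominion {r : S.F → S.F → Prop} {C A : OAlg S} (ι : OHom C A) :
    Set.range ι.toFun ⊆ Dominion r ι := by
  rintro _ ⟨c, rfl⟩ D hD f g hag
  exact hag c

end Aux2

/-- Equivalence of: (1) embeddability of the special amalgam,
(2) `μᵢ⁻¹[μ₁(A₁) ∩ μ₂(A₂)] = φᵢ(C)`, (3) the dominion of `φᵢ(C)` in `Aᵢ`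
equals `φᵢ(C)`, and (4) `C` is closed in `A`. -/
theorem special_amalgam_tfae {S : Signature} (r : S.F → S.F → Prop)
    (C A A₁ A₂ : OAlg S)
    (hC : SatIneq r C) (hA : SatIneq r A) (hA₁ : SatIneq r A₁) (hA₂ : SatIneq r A₂)
    (ι : OHom C A) (hι : IsOrderEmbedding ι)
    (α₁ : OHom A A₁) (α₂ : OHom A A₂) (hα₁ : IsOrderIso α₁) (hα₂ : IsOrderIso α₂)
    (φ₁ : OHom C A₁) (φ₂ : OHom C A₂)
    (hφ₁ : ∀ c : C.carrier, φ₁.toFun c = α₁.toFun (ι.toFun c))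
    (hφ₂ : ∀ c : C.carrier, φ₂.toFun c = α₂.toFun (ι.toFun c))
    (P : OAlg S) (μ₁ : OHom A₁ P) (μ₂ : OHom A₂ P)
    (hP : IsPushout r φ₁ φ₂ P μ₁ μ₂) :
    -- (1) the special amalgam is embeddable
    ((IsOrderEmbedding μ₁ ∧ IsOrderEmbedding μ₂ ∧
        ∀ (x : A₁.carrier) (y : A₂.carrier), μ₁.toFun x = μ₂.toFun y →
          ∃ c : C.carrier, x = φ₁.toFun c ∧ y = φ₂.toFun c)
      ↔
    -- (2) μᵢ⁻¹[μ₁(A₁) ∩ μ₂(A₂)] = φᵢ(C)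
      (μ₁.toFun ⁻¹' (Set.range μ₁.toFun ∩ Set.range μ₂.toFun) = Set.range φ₁.toFun ∧
       μ₂.toFun ⁻¹' (Set.range μ₁.toFun ∩ Set.range μ₂.toFun) = Set.range φ₂.toFun)) ∧
    ((μ₁.toFun ⁻¹' (Set.range μ₁.toFun ∩ Set.range μ₂.toFun) = Set.range φ₁.toFun ∧
       μ₂.toFun ⁻¹' (Set.range μ₁.toFun ∩ Set.range μ₂.toFun) = Set.range φ₂.toFun)
      ↔
    -- (3) Dom_{Aᵢ}(φᵢ(C)) = φᵢ(C)
      (Dominion r φ₁ = Set.range φ₁.toFun ∧ Dominion r φ₂ = Set.range φ₂.toFun)) ∧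
    ((Dominion r φ₁ = Set.range φ₁.toFun ∧ Dominion r φ₂ = Set.range φ₂.toFun)
      ↔
    -- (4) C is closed in A
      Dominion r ι = Set.range ι.toFun) := by
  -- The pushout maps are always order-embeddings for the special amalgam
  obtain ⟨δ₀, ⟨hδ₀1, hδ₀2⟩, -⟩ := hP.2.2 A hA (invHom α₁ hα₁) (invHom α₂ hα₂) (fun c => by
    show (invHom α₁ hα₁).toFun (φ₁.toFun c) = (invHom α₂ hα₂).toFun (φ₂.toFun c)
    rw [hφ₁ c, hφ₂ c, invHom_left, invHom_left])
  have hemb₁ : IsOrderEmbedding μ₁ := by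
    intro x y hxy
    have h := δ₀.mono _ _ hxy
    rw [hδ₀1 x, hδ₀1 y] at h
    have h2 := α₁.mono _ _ h
    rwa [invHom_right, invHom_right] at h2
  have hemb₂ : IsOrderEmbedding μ₂ := by
    intro x y hxy
    have h := δ₀.mono _ _ hxy
    rw [hδ₀2 x, hδ₀2 y] at h
    have h2 := α₂.mono _ _ h
    rwa [invHom_right, invHom_right] at h2
  have hinj₂ : Function.Injective μ₂.toFun := fun x y hxy =>
    A₂.le_antisymm x y (hemb₂ x y (by rw [hxy]; exact P.le_refl _))
      (hemb₂ y x (by rw [hxy]; exact P.le_refl _))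
  have hD1 : Dominion r φ₁ = μ₁.toFun ⁻¹' (Set.range μ₂.toFun) :=
    dominion_eq_preimage ι α₁ α₂ hα₁ hα₂ φ₁ φ₂ hφ₁ hφ₂ P μ₁ μ₂ hP
  have hD2 : Dominion r φ₂ = μ₂.toFun ⁻¹' (Set.range μ₁.toFun) :=
    dominion_eq_preimage ι α₂ α₁ hα₂ hα₁ φ₂ φ₁ hφ₂ hφ₁ P μ₂ μ₁ (pushout_symm hP)
  have hpre₁ : μ₁.toFun ⁻¹' (Set.range μ₁.toFun ∩ Set.range μ₂.toFun)
      = μ₁.toFun ⁻¹' (Set.range μ₂.toFun) :=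
    Set.ext fun x => ⟨fun h => h.2, fun h => ⟨⟨x, rfl⟩, h⟩⟩
  have hpre₂ : μ₂.toFun ⁻¹' (Set.range μ₁.toFun ∩ Set.range μ₂.toFun)
      = μ₂.toFun ⁻¹' (Set.range μ₁.toFun) :=
    Set.ext fun x => ⟨fun h => h.1, fun h => ⟨h, ⟨x, rfl⟩⟩⟩
  refine ⟨?_, ?_, ?_⟩
  · -- (1) ↔ (2)
    constructor
    · rintro ⟨-, -, h3⟩
      constructor
      · ext x
        simp only [Set.mem_preimage, Set.mem_inter_iff, Set.mem_range]
        constructor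
        · rintro ⟨-, b, hb⟩
          obtain ⟨c, hc, -⟩ := h3 x b hb.symm
          exact ⟨c, hc.symm⟩
        · rintro ⟨c, rfl⟩
          exact ⟨⟨φ₁.toFun c, rfl⟩, ⟨φ₂.toFun c, (hP.2.1 c).symm⟩⟩
      · ext y
        simp only [Set.mem_preimage, Set.mem_inter_iff, Set.mem_range]
        constructor
        · rintro ⟨⟨a, ha⟩, -⟩
          obtain ⟨c, -, hc⟩ := h3 a y ha
          exact ⟨c, hc.symm⟩
        · rintro ⟨c, rfl⟩
          exact ⟨⟨φ₁.toFun c, hP.2.1 c⟩, ⟨φ₂.toFun c, rfl⟩⟩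
    · rintro ⟨h1, h2⟩
      refine ⟨hemb₁, hemb₂, fun x y hxy => ?_⟩
      have hx : x ∈ Set.range φ₁.toFun := by
        rw [← h1]; exact ⟨⟨x, rfl⟩, ⟨y, hxy.symm⟩⟩
      obtain ⟨c, rfl⟩ := hx
      have hy : μ₂.toFun (φ₂.toFun c) = μ₂.toFun y := by
        rw [← hP.2.1 c]; exact hxy
      exact ⟨c, rfl, (hinj₂ hy).symm⟩
  · -- (2) ↔ (3)
    rw [hD1, hD2, hpre₁, hpre₂]
  · -- (3) ↔ (4)
    constructor
    · rintro ⟨h1, -⟩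
      apply Set.Subset.antisymm _ (range_subset_dominion ι)
      intro d hd
      have h := (dominion_transport ι α₁ hα₁ φ₁ hφ₁ d).1 hd
      rw [h1] at h
      obtain ⟨c, hc⟩ := h
      refine ⟨c, ?_⟩
      apply iso_inj α₁ hα₁
      rw [← hφ₁ c]
      exact hc
    · intro h4
      constructor
      · apply Set.Subset.antisymm _ (range_subset_dominion φ₁)
        intro d hd
        have h : (invHom α₁ hα₁).toFun d ∈ Dominion r ι :=
          (dominion_transport ι α₁ hα₁ φ₁ hφ₁ _).2 (by rw [invHom_right]; exact hd)
        rw [h4] at h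
        obtain ⟨c, hc⟩ := h
        exact ⟨c, by rw [hφ₁ c, hc, invHom_right]⟩
      · apply Set.Subset.antisymm _ (range_subset_dominion φ₂)
        intro d hd
        have h : (invHom α₂ hα₂).toFun d ∈ Dominion r ι :=
          (dominion_transport ι α₂ hα₂ φ₂ hφ₂ _).2 (by rw [invHom_right]; exact hd)
        rw [h4] at h
        obtain ⟨c, hc⟩ := h
        exact ⟨c, by rw [hφ₂ c, hc, invHom_right]⟩
end
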